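/- Let q be odd and s a non-square in F_q. The plane cubic D : X₃²X₄ - X₂(sX₂ - X₄)² = 0 in PG(2,q) (coordinates X₂, X₃, X₄) has exactly q+2 points, and the point (1, 0, s) is an isolated double point of D: it lies on D, is a singular point, and every line of PG(2,q) through it meets D in at most one further point. -/
import Mathlib

open Projectivization

/-- The plane cubic `D : X₃²X₄ - X₂(sX₂ - X₄)² = 0`, in coordinates
`(X₂ : X₃ : X₄) = (w 0 : w 1 : w 2)`. -/
def cubicDs {F : Type*} [Field F] (s : F) (w : Fin 3 → F) : F :=
  w 1 ^ 2 * w 2 - w 0 * (s * w 0 - w 2) ^ 2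

/-- The gradient of `cubicDs`. -/
def cubicDsGrad {F : Type*} [Field F] (s : F) (w : Fin 3 → F) : Fin 3 → F :=
  ![-((s * w 0 - w 2) ^ 2) - 2 * s * w 0 * (s * w 0 - w 2),
    2 * w 1 * w 2,
    w 1 ^ 2 + 2 * w 0 * (s * w 0 - w 2)]

theorem vec3_ne_zero_fst' {F : Type*} [Field F] (b c : F) :
    (![1, b, c] : Fin 3 → F) ≠ 0 := by
  intro h
  have := congrFun h 0
  simp at this

/-- The point `(1 : 0 : s)` of `PG(2,q)`. -/
noncomputable def doublePt {F : Type*} [Field F] (s : F) :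
    Projectivization F (Fin 3 → F) :=
  Projectivization.mk F (![1, 0, s] : Fin 3 → F) (vec3_ne_zero_fst' 0 s)

namespace Stmt17Aux

variable {F : Type*} [Field F]

lemma vec3_ne_zero_snd : (![0, 1, 0] : Fin 3 → F) ≠ 0 := by
  intro h; have := congrFun h 1; simp at this

lemma vec3_ne_zero_last (a b : F) : (![a, b, 1] : Fin 3 → F) ≠ 0 := by
  intro h; have := congrFun h 2; simp at this

lemma cubic_smul (s c : F) (v : Fin 3 → F) :
    cubicDs s (c • v) = c ^ 3 * cubicDs s v := by
  simp only [cubicDs, Pi.smul_apply, smul_eq_mul]; ring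

lemma cubic_rep_iff (s : F) {v : Fin 3 → F} (hv : v ≠ 0) :
    cubicDs s (Projectivization.mk F v hv).rep = 0 ↔ cubicDs s v = 0 := by
  obtain ⟨a, ha⟩ := (Projectivization.mk_eq_mk_iff F _ _
    (Projectivization.rep_nonzero _) hv).mp (Projectivization.mk_rep _)
  rw [← ha, Units.smul_def, cubic_smul]
  simp [Units.ne_zero, pow_eq_zero_iff]

/-- representatives of `doublePt` -/
lemma doublePt_rep (s : F) : ∃ a : Fˣ,
    (doublePt s).rep = (a : F) • ![1, 0, s] := by
  obtain ⟨a, ha⟩ := (Projectivization.mk_eq_mk_iff F _ _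
    (Projectivization.rep_nonzero (doublePt s)) (vec3_ne_zero_fst' 0 s)).mp
    (Projectivization.mk_rep (doublePt s))
  exact ⟨a, by rw [← ha, Units.smul_def]⟩

/-- the parametrization of `D` minus the double point -/
noncomputable def g (s : F) : Option F → Projectivization F (Fin 3 → F)
  | none => Projectivization.mk F ![0, 1, 0] vec3_ne_zero_snd
  | some u => Projectivization.mk F ![u ^ 2, u * (s * u ^ 2 - 1), 1] (vec3_ne_zero_last _ _)

lemma mk_last_one_eq_iff (x y x' y' : F) :
    Projectivization.mk F ![x, y, 1] (vec3_ne_zero_last _ _) =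
      Projectivization.mk F ![x', y', 1] (vec3_ne_zero_last _ _) ↔ x = x' ∧ y = y' := by
  rw [Projectivization.mk_eq_mk_iff]
  constructor
  · rintro ⟨a, ha⟩
    have h2 := congrFun ha 2
    simp [Pi.smul_apply, Units.smul_def, smul_eq_mul] at h2
    have h0 := congrFun ha 0
    have h1 := congrFun ha 1
    simp [Pi.smul_apply, Units.smul_def, smul_eq_mul, h2] at h0 h1
    exact ⟨h0.symm, h1.symm⟩
  · rintro ⟨rfl, rfl⟩; exact ⟨1, by simp⟩

lemma g_injective {s : F} (h2 : (2 : F) ≠ 0) (hs : ¬ IsSquare s) :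
    Function.Injective (g (F := F) s) := by
  intro x y hxy
  match x, y with
  | none, none => rfl
  | none, some u =>
    exfalso
    rw [g, g, Projectivization.mk_eq_mk_iff] at hxy
    obtain ⟨a, ha⟩ := hxy
    have h2' := congrFun ha 2
    have h1 := congrFun ha 1
    simp [Pi.smul_apply, Units.smul_def, smul_eq_mul] at h2' h1
  | some u, none =>
    exfalso
    rw [g, g, Projectivization.mk_eq_mk_iff] at hxy
    obtain ⟨a, ha⟩ := hxy
    have h2' := congrFun ha 2
    simp [Pi.smul_apply, Units.smul_def, smul_eq_mul] at h2'
  | some u, some u' =>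
    rw [g, g, mk_last_one_eq_iff] at hxy
    obtain ⟨hx, hy⟩ := hxy
    rcases mul_eq_zero.mp (show (u - u') * (u + u') = 0 by linear_combination hx) with h | h
    · exact congrArg some (sub_eq_zero.mp h)
    · -- u' = -u
      have hu' : u' = -u := eq_neg_of_add_eq_zero_right h
      subst hu'
      have : 2 * (u * (s * u ^ 2 - 1)) = 0 := by linear_combination hy
      have h3 : u * (s * u ^ 2 - 1) = 0 := by
        rcases mul_eq_zero.mp this with h | h
        · exact absurd h h2
        · exact h
      rcases mul_eq_zero.mp h3 with h | h
      · subst h; simp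
      · exfalso
        have hu : u ≠ 0 := by
          rintro rfl; simp at h
        exact hs ⟨u⁻¹, by field_simp; linear_combination h⟩


end Stmt17Aux

open Stmt17Aux in
/-- for `q` odd and `s` a non-square, the plane cubic
`D : X₃²X₄ - X₂(sX₂ - X₄)² = 0` of `PG(2,q)` has exactly `q+2` points, and
`(1 : 0 : s)` is an isolated double point of `D`: it lies on `D`, is singular
(all partial derivatives vanish there), and every line of `PG(2,q)` through it
meets `D` in at most one further point. -/
theorem stmt17 (F : Type*) [Field F] [Fintype F] (hodd : Odd (Fintype.card F))
    (s : F) (hs : ¬ IsSquare s) :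
    {P : Projectivization F (Fin 3 → F) | cubicDs s P.rep = 0}.ncard =
      Fintype.card F + 2 ∧
    cubicDs s (doublePt s).rep = 0 ∧
    cubicDsGrad s (doublePt s).rep = 0 ∧
    ∀ L : Submodule F (Fin 3 → F), Module.finrank F L = 2 →
      (doublePt s).rep ∈ L →
      {P : Projectivization F (Fin 3 → F) | cubicDs s P.rep = 0 ∧
        P ≠ doublePt s ∧ P.rep ∈ L}.ncard ≤ 1 := by
  have hs0 : s ≠ 0 := fun h => hs ⟨0, by rw [h]; ring⟩
  have h2 : (2 : F) ≠ 0 := by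
    intro h
    have hchar := CharP.ringChar_of_prime_eq_zero Nat.prime_two (by exact_mod_cast h)
    have := FiniteField.even_card_iff_char_two.mp hchar
    rw [Nat.odd_iff] at hodd
    omega
  obtain ⟨a, ha⟩ := doublePt_rep (F := F) s
  have hD0 : cubicDs s (doublePt s).rep = 0 := by
    rw [ha, cubic_smul]
    have : cubicDs s (![1, 0, s] : Fin 3 → F) = 0 := by
      simp [cubicDs]
    rw [this, mul_zero]
  have hDgrad : cubicDsGrad s (doublePt s).rep = 0 := by
    rw [ha]
    have hsm : ((a : F) • ![1, 0, s] : Fin 3 → F) = ![(a : F), 0, (a : F) * s] := by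
      funext j; fin_cases j <;> simp
    rw [hsm]
    simp [cubicDsGrad, show s * (a : F) - (a : F) * s = 0 by ring, Matrix.cons_eq_zero_iff]
  refine ⟨?_, hD0, hDgrad, ?_⟩
  · -- counting
    have hnotmem : doublePt s ∉ Set.range (g s) := by
      rintro ⟨o, ho⟩
      match o with
      | none =>
        rw [g] at ho
        unfold doublePt at ho
        rw [Projectivization.mk_eq_mk_iff] at ho
        obtain ⟨b, hb⟩ := ho
        have h0 := congrFun hb 0
        have h1 := congrFun hb 1
        simp [Pi.smul_apply, Units.smul_def, smul_eq_mul] at h0 h1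
      | some u =>
        rw [g] at ho
        unfold doublePt at ho
        rw [Projectivization.mk_eq_mk_iff] at ho
        obtain ⟨b, hb⟩ := ho
        have h0 := congrFun hb 0
        have h2' := congrFun hb 2
        simp [Pi.smul_apply, Units.smul_def, smul_eq_mul] at h0 h2'
        have hu : u ≠ 0 := by
          rintro rfl
          simp at h0
        have hsu : s * u ^ 2 = 1 := by linear_combination h2' - s * h0
        exact hs ⟨u⁻¹, by field_simp; linear_combination hsu⟩
    have hSet : {P : Projectivization F (Fin 3 → F) | cubicDs s P.rep = 0}
        = insert (doublePt s) (Set.range (g s)) := by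
      ext P
      simp only [Set.mem_setOf_eq, Set.mem_insert_iff, Set.mem_range]
      constructor
      · intro hP
        by_cases hv2 : P.rep 2 = 0
        · right
          refine ⟨none, ?_⟩
          have hv0 : P.rep 0 = 0 := by
            have : -(s ^ 2 * P.rep 0 ^ 3) = 0 := by
              rw [← hP]; simp [cubicDs, hv2]; ring
            have h3 : P.rep 0 ^ 3 = 0 := by
              rcases mul_eq_zero.mp (neg_eq_zero.mp this) with h | h
              · exact absurd (pow_eq_zero_iff (by norm_num)|>.mp h) hs0
              · exact h
            exact pow_eq_zero_iff (by norm_num) |>.mp h3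
          have hv1 : P.rep 1 ≠ 0 := by
            intro hv1
            apply P.rep_nonzero
            funext i; fin_cases i <;> simp [hv0, hv1, hv2]
          rw [g, ← Projectivization.mk_rep P, Projectivization.mk_eq_mk_iff]
          refine ⟨(Units.mk0 (P.rep 1) hv1)⁻¹, ?_⟩
          funext i
          fin_cases i <;>
            simp [Pi.smul_apply, Units.smul_def, smul_eq_mul, hv0, hv2] <;>
            field_simp
        · -- affine chart
          set x := P.rep 0 / P.rep 2 with hx
          set y := P.rep 1 / P.rep 2 with hy
          have hPmk : P = Projectivization.mk F ![x, y, 1] (vec3_ne_zero_last x y) := by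
            rw [← Projectivization.mk_rep P, Projectivization.mk_eq_mk_iff]
            refine ⟨Units.mk0 (P.rep 2) hv2, ?_⟩
            funext i
            fin_cases i <;>
              simp [Pi.smul_apply, Units.smul_def, smul_eq_mul, hx, hy] <;>
              field_simp
          have hxy : cubicDs s ![x, y, 1] = 0 := by
            have hveq : P.rep = P.rep 2 • ![x, y, 1] := by
              funext i
              fin_cases i <;> simp [Pi.smul_apply, smul_eq_mul, hx, hy] <;> field_simp
            have := hP
            rw [hveq, cubic_smul] at this
            rcases mul_eq_zero.mp this with h | h
            · exact absurd (pow_eq_zero_iff (by norm_num)|>.mp h) hv2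
            · exact h
          have hxy' : y ^ 2 - x * (s * x - 1) ^ 2 = 0 := by
            simpa [cubicDs] using hxy
          by_cases hsx : s * x - 1 = 0
          · left
            have hy0 : y = 0 := by
              have : y ^ 2 = 0 := by rw [hsx] at hxy'; simpa using hxy'
              exact pow_eq_zero_iff (by norm_num) |>.mp this
            rw [hPmk, hy0]
            unfold doublePt
            rw [Projectivization.mk_eq_mk_iff]
            refine ⟨Units.mk0 s⁻¹ (inv_ne_zero hs0), ?_⟩
            have hxval : x = s⁻¹ := by
              field_simp
              linear_combination hsx
            funext i
            fin_cases i <;>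
              simp [Pi.smul_apply, Units.smul_def, smul_eq_mul, hxval] <;> field_simp
          · right
            refine ⟨some (y / (s * x - 1)), ?_⟩
            set u := y / (s * x - 1) with hu
            have hu2 : u ^ 2 = x := by
              rw [hu]
              field_simp
              linear_combination hxy'
            have hu1 : u * (s * u ^ 2 - 1) = y := by
              rw [hu2, hu]
              field_simp
            have hvec : (![u ^ 2, u * (s * u ^ 2 - 1), 1] : Fin 3 → F) = ![x, y, 1] := by
              funext i
              fin_cases i
              · simpa using hu2
              · simpa using hu1
              · simp
            rw [g, hPmk, Projectivization.mk_eq_mk_iff]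
            exact ⟨1, by rw [one_smul, hvec]⟩
      · rintro (rfl | ⟨o, rfl⟩)
        · exact hD0
        · match o with
          | none =>
            rw [g, cubic_rep_iff]
            simp [cubicDs]
          | some u =>
            rw [g, cubic_rep_iff]
            simp [cubicDs]
            ring
    rw [hSet, Set.ncard_insert_of_notMem hnotmem (Set.toFinite _),
      ← Nat.card_coe_set_eq, Nat.card_range_of_injective (g_injective h2 hs),
      Nat.card_eq_fintype_card, Fintype.card_option]
  · -- lines through the double point
    intro L hL2 hPL
    set p0 : Fin 3 → F := ![1, 0, s] with hp0def
    have hp0 : p0 ≠ 0 := vec3_ne_zero_fst' 0 s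
    have hp0L : p0 ∈ L := by
      have hmem := L.smul_mem ((a : F)⁻¹) hPL
      rwa [ha, smul_smul, inv_mul_cancel₀ a.ne_zero, one_smul] at hmem
    obtain ⟨v, hvL, hvns⟩ : ∃ v ∈ L, v ∉ Submodule.span F {p0} := by
      by_contra hcon
      push_neg at hcon
      have hle : L ≤ Submodule.span F {p0} := fun w hw => hcon w hw
      have hfr := Submodule.finrank_mono (R := F) hle
      rw [finrank_span_singleton hp0, hL2] at hfr
      omega
    have hli : LinearIndependent F ![v, p0] := by
      rw [linearIndependent_fin2]
      refine ⟨by simpa using hp0, fun c hc => hvns ?_⟩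
      simp only [Matrix.cons_val_one, Matrix.head_cons, Matrix.cons_val_zero] at hc
      exact Submodule.mem_span_singleton.mpr ⟨c, hc⟩
    have hspan : Submodule.span F {v, p0} = L := by
      apply Submodule.eq_of_le_of_finrank_le
      · rw [Submodule.span_le, Set.insert_subset_iff, Set.singleton_subset_iff]
        exact ⟨hvL, hp0L⟩
      · rw [hL2]
        have hr : Set.range ![v, p0] = {v, p0} := by
          ext w
          simp [Fin.exists_fin_two, or_comm]
        rw [← hr, finrank_span_eq_card hli]
        simp
    set c2 : F := s * v 1 ^ 2 - (s * v 0 - v 2) ^ 2 with hc2def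
    have hc2 : c2 ≠ 0 := by
      intro h
      by_cases hb : v 1 = 0
      · have hz : s * v 0 - v 2 = 0 := by
          have hsq : (s * v 0 - v 2) ^ 2 = 0 := by
            rw [hc2def, hb] at h
            linear_combination -h
          exact pow_eq_zero_iff (by norm_num) |>.mp hsq
        apply hvns
        refine Submodule.mem_span_singleton.mpr ⟨v 0, ?_⟩
        funext i
        fin_cases i <;> simp [hp0def, Pi.smul_apply, smul_eq_mul, hb]
        linear_combination hz
      · exact hs ⟨(s * v 0 - v 2) / v 1, by field_simp; linear_combination h⟩
    have hkey : ∀ μ lam : F, cubicDs s (μ • p0 + lam • v) =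
        lam ^ 2 * (c2 * μ + cubicDs s v * lam) := by
      intro μ lam
      simp only [cubicDs, hc2def, hp0def, Pi.add_apply, Pi.smul_apply, smul_eq_mul,
        Matrix.cons_val_zero, Matrix.cons_val_one, Matrix.head_cons,
        Matrix.cons_val_two, Matrix.tail_cons]
      ring
    set w : Fin 3 → F := v - (cubicDs s v / c2) • p0 with hwdef
    have hw : w ≠ 0 := by
      intro h
      exact hvns (Submodule.mem_span_singleton.mpr
        ⟨cubicDs s v / c2, (sub_eq_zero.mp h).symm⟩)
    have hsub : {P : Projectivization F (Fin 3 → F) | cubicDs s P.rep = 0 ∧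
        P ≠ doublePt s ∧ P.rep ∈ L} ⊆ {Projectivization.mk F w hw} := by
      rintro P ⟨hPf, hPne, hPmem⟩
      have hrepL : P.rep ∈ Submodule.span F {v, p0} := hspan ▸ hPmem
      obtain ⟨lam, μ, hwl⟩ := Submodule.mem_span_pair.mp hrepL
      have hlam : lam ≠ 0 := by
        rintro rfl
        rw [zero_smul, zero_add] at hwl
        apply hPne
        have hμ : μ ≠ 0 := by
          rintro rfl
          rw [zero_smul] at hwl
          exact P.rep_nonzero hwl.symm
        rw [← Projectivization.mk_rep P]
        unfold doublePt
        rw [Projectivization.mk_eq_mk_iff]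
        exact ⟨Units.mk0 μ hμ, by rw [Units.smul_def, Units.val_mk0, ← hwl]⟩
      have heq0 : c2 * μ + cubicDs s v * lam = 0 := by
        have := hPf
        rw [← hwl, add_comm, hkey] at this
        rcases mul_eq_zero.mp this with h | h
        · exact absurd (pow_eq_zero_iff (by norm_num) |>.mp h) hlam
        · exact h
      have hμval : μ = -(cubicDs s v / c2) * lam := by
        field_simp
        linear_combination heq0
      have hrepw : P.rep = lam • w := by
        rw [← hwl, hμval, hwdef, smul_sub, smul_smul]
        module
      rw [Set.mem_singleton_iff, ← Projectivization.mk_rep P,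
        Projectivization.mk_eq_mk_iff]
      exact ⟨Units.mk0 lam hlam, by rw [Units.smul_def, Units.val_mk0, ← hrepw]⟩
    calc {P : Projectivization F (Fin 3 → F) | cubicDs s P.rep = 0 ∧
        P ≠ doublePt s ∧ P.rep ∈ L}.ncard
        ≤ ({Projectivization.mk F w hw} : Set _).ncard :=
          Set.ncard_le_ncard hsub (Set.finite_singleton _)
      _ = 1 := Set.ncard_singleton _
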